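/- arXiv:2412.11744 — 2 statements merged into one kernel-verified Lean document; each statement's English description precedes it below -/
import Mathlib

section
/- If $(T_0, T_1, \ldots, T_B)$ are exchangeable real-valued random variables, then for any $\alpha \in (0,1)$, the randomized p-value $p = \frac{1 + \sum_{b=1}^B \mathbf{1}\{T_b \geq T_0\}}{1+B}$ satisfies $P(p \leq \alpha) \leq \alpha$. -/
/-!
Let `rank v i` be the number of coordinates of `v` that are at least `v i`, so that the p-value is
`rank T 0 / (B + 1)`. For any fixed vector, at most `k` indices have rank at most `k`: all of them
lie above the smallest of them. By exchangeability every index has the same chance of having rank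
at most `k`, so `(B + 1) P(rank T 0 ≤ k) = E #{i | rank T i ≤ k} ≤ k`, and `k = ⌊α (B + 1)⌋`
gives the bound.
-/

open MeasureTheory Finset

open scoped ENNReal

section Rank

variable {ι α : Type*} [Fintype ι] [LinearOrder α]

def rank (v : ι → α) (i : ι) : ℕ := #{j | v i ≤ v j}

theorem card_rank_le_le (v : ι → α) (k : ℕ) : #{i | rank v i ≤ k} ≤ k := by
  obtain hS | hS := (univ.filter fun i => rank v i ≤ k).eq_empty_or_nonempty
  · simp [hS]
  obtain ⟨i, hi, hmin⟩ := (univ.filter fun i => rank v i ≤ k).exists_min_image v hS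
  calc #{i | rank v i ≤ k} ≤ rank v i :=
        card_le_card fun j hj => mem_filter.2 ⟨mem_univ j, hmin j hj⟩
    _ ≤ k := (mem_filter.1 hi).2

theorem rank_comp_perm (v : ι → α) (σ : Equiv.Perm ι) (i : ι) :
    rank (v ∘ σ) i = rank v (σ i) := by
  simp only [rank, card_filter, Function.comp_apply]
  exact Equiv.sum_comp σ fun j => if v (σ i) ≤ v j then 1 else 0

theorem rank_fin_zero {n : ℕ} (v : Fin (n + 1) → α) :
    rank v 0 = 1 + #{b : Fin n | v 0 ≤ v b.succ} := by
  simp [rank, Fin.card_filter_univ_succ']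

end Rank

theorem measurable_rank {ι : Type*} [Fintype ι] (i : ι) :
    Measurable fun v : ι → ℝ => rank v i := by
  simp only [rank, card_filter]
  exact Finset.measurable_sum _ fun j _ =>
    Measurable.ite (measurableSet_le (measurable_pi_apply i) (measurable_pi_apply j))
      measurable_const measurable_const

theorem sum_measure_le_of_forall_card_le {Ω ι : Type*} [MeasurableSpace Ω] [Fintype ι]
    (μ : Measure Ω) {E : ι → Set Ω} [∀ ω, DecidablePred (ω ∈ E ·)]
    (hE : ∀ i, MeasurableSet (E i)) {k : ℕ} (hk : ∀ ω, #{i | ω ∈ E i} ≤ k) : ∑ i, μ (E i) ≤ k * μ Set.univ := by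
  calc ∑ i, μ (E i) = ∑ i, ∫⁻ ω, (E i).indicator 1 ω ∂μ := by
        simp only [lintegral_indicator_one (hE _)]
    _ = ∫⁻ ω, ∑ i, (E i).indicator 1 ω ∂μ :=
        (lintegral_finsetSum _ fun i _ => measurable_one.indicator (hE i)).symm
    _ ≤ ∫⁻ _, (k : ℝ≥0∞) ∂μ := lintegral_mono fun ω => by
        simp only [Set.indicator_apply, Pi.one_apply, sum_boole]
        exact_mod_cast hk ω
    _ = k * μ Set.univ := lintegral_const _

section Exchangeable

variable {Ω ι : Type*} [MeasurableSpace Ω]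

def Exchangeable {β : Type*} [MeasurableSpace β] (X : Ω → ι → β) (μ : Measure Ω) : Prop :=
  ∀ σ : Equiv.Perm ι, μ.map (fun ω => X ω ∘ σ) = μ.map X

variable [Fintype ι] {X : Ω → ι → ℝ} {μ : Measure Ω}

theorem Exchangeable.measure_rank_le_eq (hexch : Exchangeable X μ) (hX : Measurable X)
    (k : ℕ) (i j : ι) : μ {ω | rank (X ω) i ≤ k} = μ {ω | rank (X ω) j ≤ k} := by
  classical
  have hS : MeasurableSet {v : ι → ℝ | rank v j ≤ k} := measurable_rank j measurableSet_Iic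
  have hXσ : Measurable fun ω => X ω ∘ Equiv.swap j i :=
    measurable_pi_lambda _ fun l => measurable_pi_apply _ |>.comp hX
  have h := congrArg (· {v | rank v j ≤ k}) (hexch (Equiv.swap j i))
  simpa only [Measure.map_apply hXσ hS, Measure.map_apply hX hS, Set.preimage_ofPred_eq,
    rank_comp_perm, Equiv.swap_apply_left] using h

theorem Exchangeable.card_mul_measure_rank_le (hexch : Exchangeable X μ) (hX : Measurable X)
    (k : ℕ) (i : ι) : Fintype.card ι * μ {ω | rank (X ω) i ≤ k} ≤ k * μ Set.univ := by
  calc Fintype.card ι * μ {ω | rank (X ω) i ≤ k} = ∑ j, μ {ω | rank (X ω) j ≤ k} := by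
        simp [hexch.measure_rank_le_eq hX k _ i]
    _ ≤ k * μ Set.univ :=
        sum_measure_le_of_forall_card_le μ (E := fun j => {ω | rank (X ω) j ≤ k})
          (fun j => hX (measurable_rank j measurableSet_Iic)) fun ω => card_rank_le_le (X ω) k

theorem Exchangeable.measure_rank_div_card_le (hexch : Exchangeable X μ) (hX : Measurable X)
    [IsProbabilityMeasure μ] (i : ι) {α : ℝ} (hα : 0 ≤ α) :
    μ {ω | (rank (X ω) i : ℝ) / Fintype.card ι ≤ α} ≤ ENNReal.ofReal α := by
  have hι : 0 < Fintype.card ι := Fintype.card_pos_iff.2 ⟨i⟩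
  set k := ⌊α * Fintype.card ι⌋₊
  have hset : {ω | (rank (X ω) i : ℝ) / Fintype.card ι ≤ α} = {ω | rank (X ω) i ≤ k} := by
    ext ω
    rw [Set.mem_ofPred_eq, Set.mem_ofPred_eq, Nat.le_floor_iff (by positivity),
      div_le_iff₀ (by exact_mod_cast hι)]
  have hk : (k : ℝ≥0∞) ≤ Fintype.card ι * ENNReal.ofReal α := by
    rw [← ENNReal.ofReal_natCast, ← ENNReal.ofReal_natCast (Fintype.card ι),
      ← ENNReal.ofReal_mul (by positivity), mul_comm]
    exact ENNReal.ofReal_le_ofReal (Nat.floor_le (by positivity))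
  rw [hset, ← ENNReal.mul_le_mul_iff_right (a := Fintype.card ι) (by simp [hι.ne'])
    (ENNReal.natCast_ne_top _)]
  simpa using (hexch.card_mul_measure_rank_le hX k i).trans (by simpa using hk)

end Exchangeable

/-- If `(T 0, …, T B)` are exchangeable real-valued random variables, then for any
`α ∈ (0,1)`, the randomized p-value `(1 + #{b ≥ 1 : T b ≥ T 0}) / (1 + B)` satisfies
`P(p ≤ α) ≤ α`. -/
theorem crt_pvalue_valid_of_exchangeable
    {Ω : Type*} [MeasurableSpace Ω] (P : Measure Ω) [IsProbabilityMeasure P]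
    (B : ℕ) (T : Fin (B + 1) → Ω → ℝ) (hT : ∀ i, Measurable (T i))
    (hexch : ∀ σ : Equiv.Perm (Fin (B + 1)),
      Measure.map (fun ω => fun i => T (σ i) ω) P
        = Measure.map (fun ω => fun i => T i ω) P)
    (α : ℝ) (hα : α ∈ Set.Ioo (0 : ℝ) 1) :
    P {ω | (1 + (univ.filter (fun b : Fin B => T b.succ ω ≥ T 0 ω)).card : ℝ)
            / (1 + B) ≤ α} ≤ ENNReal.ofReal α := by
  have hT_exch : Exchangeable (fun ω i => T i ω) P := hexch
  have h := hT_exch.measure_rank_div_card_le (measurable_pi_lambda _ hT) 0 hα.1.le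
  simp only [rank_fin_zero, Fintype.card_fin] at h
  push_cast at h
  simpa only [add_comm (B : ℝ)] using h
end

section
/- Suppose $(T_1, \ldots, T_B)$ are i.i.d. random variables, $T_0'$ is an independent copy with the same distribution, and $T_0$ is an arbitrary random variable (possibly with a different distribution but independent of $(T_1,\ldots,T_B)$). Then for any $\alpha \in (0,1)$, $P\left(\frac{1+\sum_{b=1}^B \mathbf{1}\{T_b \geq T_0\}}{1+B} \leq \alpha\right) \leq \alpha + d_{TV}(\mathcal{L}(T_0), \mathcal{L}(T_0'))$, where $d_{TV}$ is the total variation distance between the laws of $T_0$ and $T_0'$. -/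
open MeasureTheory ProbabilityTheory Finset

/-- Total variation distance between two measures: the supremum over measurable sets `A`
of `|μ A - ν A|`. -/
noncomputable def tvDist {α : Type*} [MeasurableSpace α] (μ ν : Measure α) : ℝ :=
  ⨆ A : {s : Set α // MeasurableSet s}, |(μ A).toReal - (ν A).toReal|

/-!
If `T₀` had the law `μ'` of `T₀'`, the vector `(T₀, T 1, …, T B)` would be i.i.d., hence
exchangeable. Since at most `α (B + 1)` of the `B + 1` rank p-values of any vector are `≤ α`,
each of them, in particular that of `T₀`, would then be `≤ α` with probability at most `α`.
In general the law of the vector is `μ ⊗ μ'^B` with `μ` the law of `T₀`; replacing `μ` by `μ'`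
changes the probability of any event by at most `d_TV(μ, μ')`, because the setwise bound
`μ A ≤ μ' A + d_TV(μ, μ')` can be integrated over the `μ'^B`-factor.
-/

open scoped ENNReal

section Rank

variable {ι β : Type*} [Fintype ι] [DecidableEq ι] [LinearOrder β]

def rankCount (i : ι) (x : ι → β) : ℕ :=
  #{j | j ≠ i ∧ x i ≤ x j}

noncomputable def rankPValue (i : ι) (x : ι → β) : ℝ :=
  (1 + rankCount i x) / Fintype.card ι

theorem rankCount_comp_perm (σ : Equiv.Perm ι) (i : ι) (x : ι → β) :
    rankCount i (x ∘ σ) = rankCount (σ i) x :=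
  card_equiv σ fun j => by simp

theorem rankPValue_comp_perm (σ : Equiv.Perm ι) (i : ι) (x : ι → β) :
    rankPValue i (x ∘ σ) = rankPValue (σ i) x := by
  simp only [rankPValue, rankCount_comp_perm]

theorem rankCount_zero {n : ℕ} (x : Fin (n + 1) → β) :
    rankCount 0 x = #{b : Fin n | x 0 ≤ x b.succ} := by
  simp [rankCount, Fin.card_filter_univ_succ, Fin.succ_ne_zero]

theorem card_rankPValue_le_le (x : ι → β) {α : ℝ} (hα : 0 ≤ α) :
    (#{i | rankPValue i x ≤ α} : ℝ) ≤ α * Fintype.card ι := by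
  set S : Finset ι := {i | rankPValue i x ≤ α}
  rcases S.eq_empty_or_nonempty with hS | hS
  · rw [hS, card_empty, Nat.cast_zero]
    positivity
  -- Every coordinate in `S` is at least as large as the smallest one, `x i₀`, so
  -- `#S ≤ 1 + rankCount i₀ x ≤ α n`.
  obtain ⟨i₀, hi₀, hmin⟩ := S.exists_min_image x hS
  have hcard : #S ≤ rankCount i₀ x + 1 :=
    calc #S ≤ #(insert i₀ ({j | j ≠ i₀ ∧ x i₀ ≤ x j} : Finset ι)) := by
          refine card_le_card fun j hj => ?_
          rw [mem_insert, mem_filter]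
          by_cases hj₀ : j = i₀
          · exact .inl hj₀
          · exact .inr ⟨mem_univ _, hj₀, hmin j hj⟩
      _ ≤ rankCount i₀ x + 1 := card_insert_le _ _
  have hn : (0 : ℝ) < Fintype.card ι := Nat.cast_pos.2 (Fintype.card_pos_iff.2 ⟨i₀⟩)
  have hi₀α : (1 + rankCount i₀ x : ℝ) ≤ α * Fintype.card ι :=
    (div_le_iff₀ hn).1 (mem_filter.1 hi₀).2
  calc (#S : ℝ) ≤ rankCount i₀ x + 1 := by exact_mod_cast hcard
    _ ≤ α * Fintype.card ι := by linarith

end Rank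

section Exchangeability

variable {ι : Type*} [Fintype ι] [DecidableEq ι]

theorem measure_pi_rankPValue_preimage_eq {β : Type*} [MeasurableSpace β] [LinearOrder β]
    (ν : Measure β) [SigmaFinite ν] (s : Set ℝ) (i j : ι) :
    Measure.pi (fun _ : ι => ν) (rankPValue j ⁻¹' s)
      = Measure.pi (fun _ : ι => ν) (rankPValue i ⁻¹' s) := by
  set σ := Equiv.swap i j
  set e := MeasurableEquiv.piCongrLeft (fun _ : ι => β) σ
  have he : ∀ x, e x = x ∘ σ := fun x => funext fun k => by
    simpa [σ] using MeasurableEquiv.piCongrLeft_apply_apply (β := fun _ => β) σ x (σ k)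
  have hpre : e ⁻¹' (rankPValue i ⁻¹' s) = rankPValue j ⁻¹' s := by
    ext x
    simp [he, rankPValue_comp_perm, σ]
  rw [← hpre]
  exact (measurePreserving_piCongrLeft (fun _ : ι => ν) σ).measure_preimage_equiv _

theorem measurable_rankCount (i : ι) : Measurable (rankCount (β := ℝ) i) := by
  have h : rankCount (β := ℝ) i = fun x => ∑ j, if j ≠ i ∧ x i ≤ x j then 1 else 0 := by
    funext x
    rw [rankCount, card_filter]
  rw [h]
  refine Finset.measurable_sum _ fun j _ => Measurable.ite ?_ measurable_const measurable_const
  exact (MeasurableSet.const _).inter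
    (measurableSet_le (measurable_pi_apply i) (measurable_pi_apply j))

theorem measurable_rankPValue (i : ι) : Measurable (rankPValue (β := ℝ) i) :=
  (measurable_from_nat.comp (measurable_rankCount i)).const_add 1 |>.div_const _

theorem measure_pi_rankPValue_le_le (ν : Measure ℝ) [IsProbabilityMeasure ν] (i : ι) {α : ℝ}
    (hα : 0 ≤ α) :
    Measure.pi (fun _ : ι => ν) {x | rankPValue i x ≤ α} ≤ ENNReal.ofReal α := by
  set π := Measure.pi (fun _ : ι => ν)
  have hE : ∀ j, MeasurableSet (rankPValue j ⁻¹' Set.Iic α) := fun j =>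
    measurable_rankPValue (ι := ι) j measurableSet_Iic
  have hsum : ∑ j, π (rankPValue j ⁻¹' Set.Iic α) ≤ ENNReal.ofReal (α * Fintype.card ι) :=
    calc ∑ j, π (rankPValue j ⁻¹' Set.Iic α)
        = ∫⁻ x, ∑ j, (rankPValue j ⁻¹' Set.Iic α).indicator 1 x ∂π := by
          rw [lintegral_finsetSum _ fun j _ => measurable_one.indicator (hE j)]
          simp_rw [lintegral_indicator_one (hE _)]
      _ ≤ ∫⁻ _, ENNReal.ofReal (α * Fintype.card ι) ∂π := by
          refine lintegral_mono fun x => ?_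
          classical
          simp only [Set.indicator_apply, Set.mem_preimage, Set.mem_Iic, Pi.one_apply]
          rw [sum_boole, ← ENNReal.ofReal_natCast]
          exact ENNReal.ofReal_le_ofReal (card_rankPValue_le_le x hα)
      _ = ENNReal.ofReal (α * Fintype.card ι) := by simp
  have : Nonempty ι := ⟨i⟩
  have hcard : (Fintype.card ι : ℝ≥0∞) ≠ 0 := Nat.cast_ne_zero.2 Fintype.card_ne_zero
  rw [sum_congr rfl fun j _ => measure_pi_rankPValue_preimage_eq ν _ i j, sum_const, card_univ,
    nsmul_eq_mul, ENNReal.ofReal_mul hα, ENNReal.ofReal_natCast, mul_comm] at hsum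
  exact (ENNReal.mul_le_mul_iff_left hcard (ENNReal.natCast_ne_top _)).1 hsum

end Exchangeability

section TotalVariation

variable {α : Type*} [MeasurableSpace α] {μ ν : Measure α}

theorem tvDist_nonneg : 0 ≤ tvDist μ ν :=
  Real.iSup_nonneg fun _ => abs_nonneg _

theorem measure_le_add_tvDist [IsFiniteMeasure μ] [IsFiniteMeasure ν] {A : Set α}
    (hA : MeasurableSet A) : μ A ≤ ν A + ENNReal.ofReal (tvDist μ ν) := by
  have hbdd : BddAbove (Set.range fun A : {s : Set α // MeasurableSet s} =>
      |(μ A).toReal - (ν A).toReal|) := by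
    refine ⟨μ.real Set.univ + ν.real Set.univ, ?_⟩
    rintro _ ⟨A, rfl⟩
    refine (abs_sub _ _).trans ?_
    rw [abs_of_nonneg ENNReal.toReal_nonneg, abs_of_nonneg ENNReal.toReal_nonneg]
    exact add_le_add (measureReal_mono (Set.subset_univ _)) (measureReal_mono (Set.subset_univ _))
  have hA' : (μ A).toReal ≤ (ν A).toReal + tvDist μ ν := by
    have hle : |(μ A).toReal - (ν A).toReal| ≤ tvDist μ ν := le_ciSup hbdd ⟨A, hA⟩
    linarith [le_abs_self ((μ A).toReal - (ν A).toReal)]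
  calc μ A = ENNReal.ofReal (μ A).toReal := (ENNReal.ofReal_toReal (measure_ne_top μ A)).symm
    _ ≤ ENNReal.ofReal ((ν A).toReal + tvDist μ ν) := ENNReal.ofReal_le_ofReal hA'
    _ = ν A + ENNReal.ofReal (tvDist μ ν) := by
      rw [ENNReal.ofReal_add ENNReal.toReal_nonneg tvDist_nonneg,
        ENNReal.ofReal_toReal (measure_ne_top ν A)]

end TotalVariation

namespace MeasureTheory.Measure

variable {α β : Type*} [MeasurableSpace α] [MeasurableSpace β]

theorem prod_apply_le_prod_apply_add {μ μ' : Measure α} [SFinite μ] [SFinite μ']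
    {ν : Measure β} [IsProbabilityMeasure ν] {c : ℝ≥0∞}
    (h : ∀ A, MeasurableSet A → μ A ≤ μ' A + c) {S : Set (α × β)} (hS : MeasurableSet S) :
    μ.prod ν S ≤ μ'.prod ν S + c := by
  rw [prod_apply_symm hS, prod_apply_symm hS]
  calc ∫⁻ y, μ ((fun x => (x, y)) ⁻¹' S) ∂ν
      ≤ ∫⁻ y, μ' ((fun x => (x, y)) ⁻¹' S) + c ∂ν :=
        lintegral_mono fun y => h _ (measurable_prodMk_right hS)
    _ = ∫⁻ y, μ' ((fun x => (x, y)) ⁻¹' S) ∂ν + c := by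
        rw [lintegral_add_right _ measurable_const, lintegral_const, measure_univ, mul_one]

theorem pi_finCons_apply_le_add {n : ℕ} {μ μ' : Measure α} [SigmaFinite μ] [SigmaFinite μ']
    (ν : Fin n → Measure α) [∀ i, IsProbabilityMeasure (ν i)] {c : ℝ≥0∞}
    (h : ∀ A, MeasurableSet A → μ A ≤ μ' A + c) {E : Set (Fin (n + 1) → α)}
    (hE : MeasurableSet E) :
    Measure.pi (Fin.cons μ ν) E ≤ Measure.pi (Fin.cons μ' ν) E + c := by
  have hsplit : ∀ (μ₀ : Measure α) [SigmaFinite μ₀], MeasurePreserving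
      (MeasurableEquiv.piFinSuccAbove (fun _ => α) 0) (Measure.pi (Fin.cons μ₀ ν))
      (μ₀.prod (Measure.pi ν)) := by
    intro μ₀ _
    have : ∀ i, SigmaFinite ((Fin.cons μ₀ ν : Fin (n + 1) → Measure α) i) :=
      Fin.cases ‹_› fun i => by rw [Fin.cons_succ]; infer_instance
    simpa using measurePreserving_piFinSuccAbove (Fin.cons μ₀ ν : Fin (n + 1) → Measure α) 0
  set e := MeasurableEquiv.piFinSuccAbove (fun _ : Fin (n + 1) => α) 0
  have hE' : e ⁻¹' (e.symm ⁻¹' E) = E := e.symm.symm_preimage_preimage E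
  rw [← hE', (hsplit μ).measure_preimage_equiv, (hsplit μ').measure_preimage_equiv]
  exact prod_apply_le_prod_apply_add h (e.symm.measurable hE)

end MeasureTheory.Measure

theorem ProbabilityTheory.iIndepFun.map_finCons_eq_pi {Ω β : Type*} [MeasurableSpace Ω]
    [MeasurableSpace β] {P : Measure Ω} {n : ℕ} {Y : Ω → β} {T : Fin n → Ω → β} {ν : Measure β}
    (h : iIndepFun (Fin.cons Y T : Fin (n + 1) → Ω → β) P) (hY : AEMeasurable Y P)
    (hT : ∀ b, AEMeasurable (T b) P) (hident : ∀ b, P.map (T b) = ν) :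
    P.map (fun ω i => (Fin.cons Y T : Fin (n + 1) → Ω → β) i ω)
      = Measure.pi (Fin.cons (P.map Y) fun _ => ν) := by
  rw [h.map_fun_eq_pi_map (Fin.cases hY hT)]
  congr 1
  funext i
  cases i using Fin.cases <;> simp [hident]

theorem crt_pvalue_bound_of_approximate_sampling_general
    {Ω : Type*} [MeasurableSpace Ω] (P : Measure Ω) [IsProbabilityMeasure P]
    (B : ℕ) (T : Fin B → Ω → ℝ) (T₀ T₀' : Ω → ℝ)
    (hT : ∀ b, Measurable (T b)) (hT₀ : Measurable T₀) (hT₀' : Measurable T₀')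
    (hident : ∀ b : Fin B, Measure.map (T b) P = Measure.map T₀' P)
    (hindep : iIndepFun (Fin.cons T₀ T : Fin (B + 1) → Ω → ℝ) P)
    (α : ℝ) (hα : α ∈ Set.Ioo (0 : ℝ) 1) :
    P {ω | (1 + (univ.filter (fun b : Fin B => T b ω ≥ T₀ ω)).card : ℝ) / (1 + B) ≤ α}
      ≤ ENNReal.ofReal (α + tvDist (Measure.map T₀ P) (Measure.map T₀' P)) := by
  have : IsProbabilityMeasure (P.map T₀) := Measure.isProbabilityMeasure_map hT₀.aemeasurable
  have : IsProbabilityMeasure (P.map T₀') := Measure.isProbabilityMeasure_map hT₀'.aemeasurable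
  set X : Ω → Fin (B + 1) → ℝ := fun ω i => (Fin.cons T₀ T : Fin (B + 1) → Ω → ℝ) i ω
  set E : Set (Fin (B + 1) → ℝ) := {x | rankPValue 0 x ≤ α}
  have hX : Measurable X := measurable_pi_lambda _ (Fin.cases hT₀ hT)
  have hE : MeasurableSet E := measurable_rankPValue 0 measurableSet_Iic
  have hevent : {ω | (1 + (univ.filter (fun b : Fin B => T b ω ≥ T₀ ω)).card : ℝ) / (1 + B) ≤ α}
      = X ⁻¹' E := by
    ext ω
    simp [X, E, rankPValue, rankCount_zero, add_comm]
  have hcons_const : (Fin.cons (P.map T₀') fun _ => P.map T₀' : Fin (B + 1) → Measure ℝ)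
      = fun _ => P.map T₀' := Fin.cons_self_tail (fun _ => P.map T₀')
  rw [hevent, ← Measure.map_apply hX hE,
    hindep.map_finCons_eq_pi hT₀.aemeasurable (fun b => (hT b).aemeasurable) hident]
  calc Measure.pi (Fin.cons (P.map T₀) fun _ => P.map T₀') E
      ≤ Measure.pi (Fin.cons (P.map T₀') fun _ => P.map T₀') E
          + ENNReal.ofReal (tvDist (P.map T₀) (P.map T₀')) :=
        Measure.pi_finCons_apply_le_add _ (fun A hA => measure_le_add_tvDist hA) hE
    _ ≤ ENNReal.ofReal α + ENNReal.ofReal (tvDist (P.map T₀) (P.map T₀')) := by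
        rw [hcons_const]
        gcongr
        exact measure_pi_rankPValue_le_le _ 0 hα.1.le
    _ = ENNReal.ofReal (α + tvDist (P.map T₀) (P.map T₀')) :=
        (ENNReal.ofReal_add hα.1.le tvDist_nonneg).symm

/-- Suppose `(T 1, …, T B)` are i.i.d., `T₀'` is an independent copy with the same
distribution, and `T₀` is an arbitrary random variable independent of `(T 1, …, T B)`.
Then for any `α ∈ (0,1)`,
`P((1 + ∑ 1{T b ≥ T₀})/(1+B) ≤ α) ≤ α + d_TV(ℒ(T₀), ℒ(T₀'))`. -/
theorem crt_pvalue_bound_of_approximate_sampling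
    {Ω : Type*} [MeasurableSpace Ω] (P : Measure Ω) [IsProbabilityMeasure P]
    (B : ℕ) (T : Fin B → Ω → ℝ) (T₀ T₀' : Ω → ℝ)
    (hT : ∀ b, Measurable (T b)) (hT₀ : Measurable T₀) (hT₀' : Measurable T₀')
    (hiid : iIndepFun (Fin.cons T₀' T : Fin (B + 1) → Ω → ℝ) P)
    (hident : ∀ b : Fin B, Measure.map (T b) P = Measure.map T₀' P)
    (hindep : iIndepFun (Fin.cons T₀ T : Fin (B + 1) → Ω → ℝ) P)
    (α : ℝ) (hα : α ∈ Set.Ioo (0 : ℝ) 1) :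
    P {ω | (1 + (univ.filter (fun b : Fin B => T b ω ≥ T₀ ω)).card : ℝ) / (1 + B) ≤ α}
      ≤ ENNReal.ofReal (α + tvDist (Measure.map T₀ P) (Measure.map T₀' P)) :=
  crt_pvalue_bound_of_approximate_sampling_general P B T T₀ T₀' hT hT₀ hT₀' hident hindep α hα
end
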